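/- Let f : ℝⁿ → ℝ be continuously differentiable and g : ℝⁿ → ℝ be continuous, differentiable in the first coordinate except on finitely many hyperplanes {x₁ = c_j}, with integrable partial derivatives. Then for fixed x₂,…,xₙ, lim_{a→∞, b→−∞}[f(a,x₂,…)g(a,x₂,…) − f(b,x₂,…)g(b,x₂,…)] = ∫_ℝ f ∂g/∂x₁ dx₁ + ∫_ℝ g ∂f/∂x₁ dx₁. -/

import Mathlib

open MeasureTheory Filter Topology

theorem tendsto_sub_integral_of_hasDerivAt_off_countable {E : Type*} [NormedAddCommGroup E]
    [NormedSpace ℝ E] [CompleteSpace E] {h h' : ℝ → E} {s : Set ℝ} (hs : s.Countable)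
    (hc : Continuous h) (hd : ∀ t ∉ s, HasDerivAt h (h' t) t) (hi : Integrable h') :
    Tendsto (fun ab : ℝ × ℝ => h ab.1 - h ab.2) (atTop ×ˢ atBot) (𝓝 (∫ t, h' t)) :=
  (intervalIntegral_tendsto_integral hi tendsto_snd tendsto_fst).congr fun _ =>
    integral_eq_of_hasDerivAt_off_countable h h' hs hc.continuousOn (fun t ht => hd t ht.2)
      hi.intervalIntegrable

/-- Integration by parts on the first coordinate for an a.e.-differentiable factor:
if `f : ℝⁿ → ℝ` is `C¹`, `g : ℝⁿ → ℝ` is continuous and differentiable in the first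
coordinate except on finitely many hyperplanes `{x₁ = c}`, with integrable partial
derivatives, then for fixed `x₂,…,xₙ`,
`lim_{a→∞, b→−∞} [f g (a,…) − f g (b,…)] = ∫ f ∂₁g + ∫ g ∂₁f`. -/
theorem ae_differentiable_integration_by_parts (n : ℕ) (f g : (Fin (n + 1) → ℝ) → ℝ)
    (hf : ContDiff ℝ 1 f) (hg : Continuous g) (x : Fin (n + 1) → ℝ) (C : Finset ℝ)
    (hgd : ∀ t ∉ C, DifferentiableAt ℝ (fun s => g (Function.update x 0 s)) t)
    (hint1 : Integrable fun t =>
      f (Function.update x 0 t) * deriv (fun s => g (Function.update x 0 s)) t)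
    (hint2 : Integrable fun t =>
      g (Function.update x 0 t) * deriv (fun s => f (Function.update x 0 s)) t) :
    Tendsto
      (fun ab : ℝ × ℝ =>
        f (Function.update x 0 ab.1) * g (Function.update x 0 ab.1) -
          f (Function.update x 0 ab.2) * g (Function.update x 0 ab.2))
      (atTop ×ˢ atBot)
      (nhds
        ((∫ t, f (Function.update x 0 t) * deriv (fun s => g (Function.update x 0 s)) t) +
          ∫ t, g (Function.update x 0 t) * deriv (fun s => f (Function.update x 0 s)) t)) := by
  have hline : Differentiable ℝ (Function.update x 0) := fun s =>
    (hasDerivAt_update x 0 s).differentiableAt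
  have hfd : Differentiable ℝ fun s => f (Function.update x 0 s) :=
    (hf.differentiable one_ne_zero).comp hline
  rw [← integral_add hint1 hint2]
  refine tendsto_sub_integral_of_hasDerivAt_off_countable C.countable_toSet
    ((hf.continuous.comp hline.continuous).mul (hg.comp hline.continuous))
    (fun t ht => ?_) (hint1.add hint2)
  exact ((hfd t).hasDerivAt.mul (hgd t ht).hasDerivAt).congr_deriv (by ring)
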